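/- arXiv:2001.01063 — 6 statements merged into one kernel-verified Lean document; each statement's English description precedes it below -/
import Mathlib

section
/- Let C = 4·∑_{n=1}^∞ 1/n² = 2π²/3. For any integers b, l ≥ 2 with b ≥ l, the sum of (a₁⋯a_l)^{-2} over all tuples (a₁,...,a_l) of positive integers with a₁+⋯+a_l = b is at most C^{l-1}·b^{-2}. -/
open Finset Real

lemma partial_basel (n : ℕ) : ∑ a ∈ Finset.Icc 1 n, ((a:ℝ)^2)⁻¹ ≤ π^2/6 := by
  have h := hasSum_zeta_two
  have := sum_le_hasSum (Finset.Icc 1 n) (fun i _ => by positivity) h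
  simpa [one_div] using this

lemma reflect (m : ℕ) :
    ∑ a ∈ Finset.Icc 1 m, (((m+1-a : ℕ):ℝ)^2)⁻¹ = ∑ a ∈ Finset.Icc 1 m, ((a:ℝ)^2)⁻¹ :=
  Finset.sum_nbij' (i := fun a => m+1-a) (j := fun a => m+1-a)
    (fun a ha => by simp only [Finset.mem_Icc] at *; omega)
    (fun a ha => by simp only [Finset.mem_Icc] at *; omega)
    (fun a ha => by simp only [Finset.mem_Icc] at *; omega)
    (fun a ha => by simp only [Finset.mem_Icc] at *; omega)
    (fun a ha => rfl)

lemma two_var (m : ℕ) :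
    ∑ k ∈ Finset.Icc 1 m, ((k:ℝ)^2)⁻¹ * (((m+1-k : ℕ):ℝ)^2)⁻¹
      ≤ (2/3) * π^2 * (((m+1 : ℕ):ℝ)^2)⁻¹ := by
  have step : ∀ k ∈ Finset.Icc 1 m, ((k:ℝ)^2)⁻¹ * (((m+1-k : ℕ):ℝ)^2)⁻¹
      ≤ (((m+1:ℕ):ℝ)^2)⁻¹ * 2 * (((k:ℝ)^2)⁻¹ + (((m+1-k:ℕ):ℝ)^2)⁻¹) := by
    intro k hk
    simp only [Finset.mem_Icc] at hk
    set x : ℝ := (k:ℝ) with hx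
    set y : ℝ := ((m+1-k : ℕ):ℝ) with hy
    have hx1 : (1:ℝ) ≤ x := by simp [hx]; omega
    have hy1 : (1:ℝ) ≤ y := by simp [hy]; omega
    have hxy : x + y = ((m+1:ℕ):ℝ) := by
      rw [hx, hy, ← Nat.cast_add]; congr 1; omega
    have hx0 : (0:ℝ) < x := by linarith
    have hy0 : (0:ℝ) < y := by linarith
    rw [← hxy]
    have hid : (x^2)⁻¹ * (y^2)⁻¹ = ((x+y)^2)⁻¹ * (x⁻¹ + y⁻¹)^2 := by
      field_simp; ring
    rw [hid, mul_assoc]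
    apply mul_le_mul_of_nonneg_left _ (by positivity)
    have h2 : (x⁻¹ + y⁻¹)^2 ≤ 2 * ((x⁻¹)^2 + (y⁻¹)^2) := by
      nlinarith [sq_nonneg (x⁻¹ - y⁻¹)]
    calc (x⁻¹ + y⁻¹)^2 ≤ 2 * ((x⁻¹)^2 + (y⁻¹)^2) := h2
      _ = 2 * ((x^2)⁻¹ + (y^2)⁻¹) := by rw [inv_pow, inv_pow]
  calc ∑ k ∈ Finset.Icc 1 m, ((k:ℝ)^2)⁻¹ * (((m+1-k : ℕ):ℝ)^2)⁻¹
      ≤ ∑ k ∈ Finset.Icc 1 m, (((m+1:ℕ):ℝ)^2)⁻¹ * 2 * (((k:ℝ)^2)⁻¹ + (((m+1-k:ℕ):ℝ)^2)⁻¹) :=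
        Finset.sum_le_sum step
    _ = (((m+1:ℕ):ℝ)^2)⁻¹ * 2 * ∑ k ∈ Finset.Icc 1 m,
          (((k:ℝ)^2)⁻¹ + (((m+1-k:ℕ):ℝ)^2)⁻¹) := (Finset.mul_sum _ _ _).symm
    _ = (((m+1:ℕ):ℝ)^2)⁻¹ * 2 * (∑ k ∈ Finset.Icc 1 m, ((k:ℝ)^2)⁻¹
          + ∑ k ∈ Finset.Icc 1 m, (((m+1-k:ℕ):ℝ)^2)⁻¹) := by rw [Finset.sum_add_distrib]
    _ = (((m+1:ℕ):ℝ)^2)⁻¹ * 4 * ∑ k ∈ Finset.Icc 1 m, ((k:ℝ)^2)⁻¹ := by rw [reflect]; ring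
    _ ≤ (((m+1:ℕ):ℝ)^2)⁻¹ * 4 * (π^2/6) :=
        mul_le_mul_of_nonneg_left (partial_basel m) (by positivity)
    _ = (2/3) * π^2 * (((m+1 : ℕ):ℝ)^2)⁻¹ := by ring


lemma bound_indep (l m b b' : ℕ) (h : m ≤ b) (h' : m ≤ b') :
    (Fintype.piFinset fun _ : Fin l => Finset.Icc 1 b).filter (fun t => ∑ i, t i = m)
      = (Fintype.piFinset fun _ : Fin l => Finset.Icc 1 b').filter (fun t => ∑ i, t i = m) := by
  ext t
  simp only [Finset.mem_filter, Fintype.mem_piFinset, Finset.mem_Icc]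
  have key : (∑ i, t i = m) → ∀ i, t i ≤ m := by
    intro hs i
    rw [← hs]
    exact Finset.single_le_sum (f := t) (fun j _ => Nat.zero_le _) (Finset.mem_univ i)
  constructor
  · rintro ⟨h1, h2⟩
    exact ⟨fun i => ⟨(h1 i).1, le_trans (key h2 i) h'⟩, h2⟩
  · rintro ⟨h1, h2⟩
    exact ⟨fun i => ⟨(h1 i).1, le_trans (key h2 i) h⟩, h2⟩

lemma decomp (l b : ℕ) :
    ∑ a ∈ (Fintype.piFinset fun _ : Fin (l+1) => Finset.Icc 1 b).filter
        (fun a => ∑ i, a i = b),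
      ((∏ i, (a i : ℝ)) ^ 2)⁻¹
    = ∑ k ∈ Finset.Icc 1 b, ((k:ℝ)^2)⁻¹ *
        ∑ t ∈ (Fintype.piFinset fun _ : Fin l => Finset.Icc 1 b).filter
            (fun t => ∑ i, t i = b - k),
          ((∏ i, (t i : ℝ)) ^ 2)⁻¹ := by
  simp_rw [Finset.mul_sum]
  rw [Finset.sum_sigma']
  refine Finset.sum_nbij' (i := fun a => ⟨a 0, Fin.tail a⟩)
    (j := fun p => Fin.cons p.1 p.2) ?_ ?_ ?_ ?_ ?_
  · rintro a ha
    simp only [Finset.mem_filter, Fintype.mem_piFinset] at ha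
    obtain ⟨h1, h2⟩ := ha
    rw [Fin.sum_univ_succ] at h2
    have ha0 : a 0 ∈ Finset.Icc 1 b := h1 0
    simp only [Finset.mem_Icc] at ha0
    simp only [Finset.mem_sigma, Finset.mem_filter, Fintype.mem_piFinset, Finset.mem_Icc]
    refine ⟨⟨ha0.1, ha0.2⟩, fun i => by simpa [Fin.tail] using Finset.mem_Icc.mp (h1 i.succ), ?_⟩
    simp only [Fin.tail]
    omega
  · rintro ⟨k, t⟩ hp
    simp only [Finset.mem_sigma, Finset.mem_filter, Fintype.mem_piFinset, Finset.mem_Icc] at hp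
    obtain ⟨hk, ht, hs⟩ := hp
    simp only [Finset.mem_filter, Fintype.mem_piFinset]
    constructor
    · intro i
      refine Fin.cases ?_ ?_ i
      · simpa using hk
      · intro j; simpa using ht j
    · rw [Fin.sum_univ_succ]
      simp only [Fin.cons_zero, Fin.cons_succ]
      have : ∑ i, t i = b - k := hs
      omega
  · intro a ha
    exact Fin.cons_self_tail a
  · rintro ⟨k, t⟩ hp
    simp [Fin.tail_cons]
  · intro a ha
    rw [Fin.prod_univ_succ]
    simp only [Fin.tail]
    rw [mul_pow, mul_inv]

lemma main_ind : ∀ l, 1 ≤ l → ∀ b : ℕ,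
    ∑ a ∈ (Fintype.piFinset fun _ : Fin l => Finset.Icc 1 b).filter
        (fun a => ∑ i, a i = b),
      ((∏ i, (a i : ℝ)) ^ 2)⁻¹ ≤ ((2/3) * π^2) ^ (l-1) * ((b : ℝ)^2)⁻¹ := by
  refine Nat.le_induction ?_ ?_
  · -- base case l = 1
    intro b
    rcases b with _ | m
    · have : (Fintype.piFinset fun _ : Fin 1 => Finset.Icc 1 0).filter
          (fun a => ∑ i, a i = 0) = ∅ := by
        ext a
        simp only [Finset.mem_filter, Fintype.mem_piFinset, Finset.mem_Icc,
          Finset.notMem_empty, iff_false]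
        rintro ⟨h1, -⟩
        have := h1 0
        omega
      rw [this]
      simp
    · have : (Fintype.piFinset fun _ : Fin 1 => Finset.Icc 1 (m+1)).filter
          (fun a => ∑ i, a i = m+1) = {fun _ => m+1} := by
        ext a
        simp only [Finset.mem_filter, Fintype.mem_piFinset, Finset.mem_Icc,
          Finset.mem_singleton, Fin.sum_univ_one]
        constructor
        · rintro ⟨-, h2⟩
          funext i
          have : i = 0 := Subsingleton.elim _ _
          rw [this, h2]
        · rintro rfl
          exact ⟨fun i => by simp, rfl⟩
      rw [this, Finset.sum_singleton]
      simp [Fin.prod_univ_one]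
  · -- inductive step
    intro l hl IH b
    rw [decomp l b]
    have step1 : ∀ k ∈ Finset.Icc 1 b, ((k:ℝ)^2)⁻¹ *
        ∑ t ∈ (Fintype.piFinset fun _ : Fin l => Finset.Icc 1 b).filter
            (fun t => ∑ i, t i = b - k),
          ((∏ i, (t i : ℝ)) ^ 2)⁻¹
        ≤ ((k:ℝ)^2)⁻¹ * (((2/3) * π^2) ^ (l-1) * (((b-k : ℕ):ℝ)^2)⁻¹) := by
      intro k hk
      simp only [Finset.mem_Icc] at hk
      have hbd := bound_indep l (b-k) b (b-k) (by omega) le_rfl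
      rw [hbd]
      exact mul_le_mul_of_nonneg_left (IH (b-k)) (by positivity)
    refine le_trans (Finset.sum_le_sum step1) ?_
    have heq : ∀ k : ℕ, ((k:ℝ)^2)⁻¹ * (((2/3) * π^2) ^ (l-1) * (((b-k : ℕ):ℝ)^2)⁻¹)
        = ((2/3) * π^2) ^ (l-1) * (((k:ℝ)^2)⁻¹ * (((b-k : ℕ):ℝ)^2)⁻¹) := fun k => by ring
    simp_rw [heq]
    rw [← Finset.mul_sum]
    rcases b with _ | m
    · simp
    · have hsplit : Finset.Icc 1 (m+1) = insert (m+1) (Finset.Icc 1 m) := by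
        ext x; simp only [Finset.mem_Icc, Finset.mem_insert]; omega
      rw [hsplit, Finset.sum_insert (by simp)]
      have hzero : ((((m+1):ℝ))^2)⁻¹ * (((m+1-(m+1) : ℕ):ℝ)^2)⁻¹ = 0 := by
        simp
      have hcast : ∀ k ∈ Finset.Icc 1 m, (((k:ℝ))^2)⁻¹ * (((m+1-k : ℕ):ℝ)^2)⁻¹
          = (((k:ℝ))^2)⁻¹ * (((m+1-k : ℕ):ℝ)^2)⁻¹ := fun _ _ => rfl
      have h1 : (((m+1:ℕ):ℝ)^2)⁻¹ * (((m+1-(m+1) : ℕ):ℝ)^2)⁻¹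
          + ∑ k ∈ Finset.Icc 1 m, ((k:ℝ)^2)⁻¹ * (((m+1-k : ℕ):ℝ)^2)⁻¹
          ≤ (2/3) * π^2 * (((m+1 : ℕ):ℝ)^2)⁻¹ := by
        have : (((m+1-(m+1) : ℕ):ℝ)^2)⁻¹ = 0 := by simp
        rw [this, mul_zero, zero_add]
        exact two_var m
      calc ((2/3) * π^2) ^ (l-1) *
            ((((m+1:ℕ):ℝ)^2)⁻¹ * (((m+1-(m+1) : ℕ):ℝ)^2)⁻¹
              + ∑ k ∈ Finset.Icc 1 m, ((k:ℝ)^2)⁻¹ * (((m+1-k : ℕ):ℝ)^2)⁻¹)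
          ≤ ((2/3) * π^2) ^ (l-1) * ((2/3) * π^2 * (((m+1 : ℕ):ℝ)^2)⁻¹) :=
            mul_le_mul_of_nonneg_left h1 (by positivity)
        _ = ((2/3) * π^2) ^ (l+1-1) * (((m+1:ℕ):ℝ)^2)⁻¹ := by
            rw [show l+1-1 = (l-1)+1 by omega, pow_succ]; ring


/-- Lemma 5.2 (Lemma `her`): with `C = 4 ∑ 1/n² = 2π²/3`, for integers `b, l ≥ 2`
with `b ≥ l`, the sum of `(a₁⋯a_l)⁻²` over tuples of positive integers summing to `b`
is at most `C^(l-1) b⁻²`. -/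
theorem stmt_0 (b l : ℕ) (hl : 2 ≤ l) (hb : 2 ≤ b) (hlb : l ≤ b) :
    ∑ a ∈ (Fintype.piFinset fun _ : Fin l => Finset.Icc 1 b).filter
        (fun a => ∑ i, a i = b),
      ((∏ i, (a i : ℝ)) ^ 2)⁻¹ ≤ ((2 / 3) * Real.pi ^ 2) ^ (l - 1) * ((b : ℝ) ^ 2)⁻¹ :=
  main_ind l (by omega) b
end

section
/- Any formal power series solution u ∈ ℂ[[t]]^n of the system t·u'(t) + A(t)·u(t) = b(t), where A is an n×n matrix of functions holomorphic at 0 and b is an n-vector of functions holomorphic at 0, has positive radius of convergence (i.e., is holomorphic at 0). -/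
/-!
With `w k = ‖u k‖` and `a p = ∑ i j, ‖A p i j‖`, the equation gives
`k * w k ≤ ‖b k‖ + ∑_{p+q=k} a p * w q`. The factor `k` on the left eventually dominates the
diagonal term `a 0 * w k`, while after rescaling by `(r/2)^k` the remaining terms are controlled by
a geometric series; so strong induction bounds `w k * (r/2)^k` uniformly, and `u` converges on a
smaller disc.
-/

open Finset Matrix

theorem pi_norm_le_sum_norm {ι E : Type*} [Fintype ι] [SeminormedAddCommGroup E] (f : ι → E) :
    ‖f‖ ≤ ∑ i, ‖f i‖ :=
  (pi_norm_le_iff_of_nonneg (by positivity)).2 fun i =>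
    single_le_sum (f := fun i => ‖f i‖) (fun _ _ => norm_nonneg _) (mem_univ i)

theorem Matrix.norm_mulVec_le_sum_norm_mul {R m n : Type*} [SeminormedRing R] [Fintype m]
    [Fintype n] (A : Matrix m n R) (v : n → R) :
    ‖A *ᵥ v‖ ≤ (∑ i, ∑ j, ‖A i j‖) * ‖v‖ := by
  refine (pi_norm_le_iff_of_nonneg (by positivity)).2 fun i => ?_
  calc ‖∑ j, A i j * v j‖ ≤ ∑ j, ‖A i j‖ * ‖v‖ :=
        norm_sum_le_of_le _ fun j _ =>
          (norm_mul_le _ _).trans (by gcongr; exact norm_le_pi_norm v j)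
    _ = (∑ j, ‖A i j‖) * ‖v‖ := (sum_mul _ _ _).symm
    _ ≤ (∑ i, ∑ j, ‖A i j‖) * ‖v‖ := by
        gcongr
        exact single_le_sum (f := fun i => ∑ j, ‖A i j‖) (fun _ _ => by positivity) (mem_univ i)

theorem sum_mul_pow_le_sum_tsum {ι : Type*} [Fintype ι] {g : ι → ℕ → ℝ} {r s : ℝ}
    (hg : ∀ i k, 0 ≤ g i k) (hs : 0 ≤ s) (hsr : s ≤ r) (h : ∀ i, Summable fun k => g i k * r ^ k)
    (k : ℕ) : (∑ i, g i k) * s ^ k ≤ ∑ i, ∑' k, g i k * r ^ k := by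
  rw [sum_mul]
  refine sum_le_sum fun i _ => ?_
  calc g i k * s ^ k ≤ g i k * r ^ k := by gcongr; exact hg i k
    _ ≤ ∑' k, g i k * r ^ k :=
        (h i).le_tsum k fun j _ => mul_nonneg (hg i j) (pow_nonneg (hs.trans hsr) _)

theorem summable_mul_pow_of_mul_pow_le {f : ℕ → ℝ} {r s M : ℝ} (hf : ∀ k, 0 ≤ f k) (hs : 0 ≤ s)
    (hsr : s < r) (h : ∀ k, f k * r ^ k ≤ M) : Summable fun k => f k * s ^ k := by
  have hr : 0 < r := hs.trans_lt hsr
  refine Summable.of_nonneg_of_le (fun k => by have := hf k; positivity) (fun k => ?_)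
    ((summable_geometric_of_lt_one (by positivity) ((div_lt_one hr).2 hsr)).mul_left M)
  calc f k * s ^ k = f k * r ^ k * (s / r) ^ k := by rw [div_pow]; field_simp
    _ ≤ M * (s / r) ^ k := by gcongr; exact h k

theorem exists_le_of_natCast_mul_le_geometric_convolution {c x : ℕ → ℝ} {C : ℝ}
    (hc0 : ∀ p, 0 ≤ c p) (hx0 : ∀ k, 0 ≤ x k) (hc : ∀ p, c p ≤ C * (1 / 2) ^ p)
    (hrec : ∀ k : ℕ, k * x k ≤ C + ∑ p ∈ antidiagonal k, c p.1 * x p.2) :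
    ∃ M, ∀ k, x k ≤ M := by
  have hC : 0 ≤ C := by simpa using (hc0 0).trans (hc 0)
  -- for `k ≥ K` we have `k - C ≥ 2 * C + 2`, which absorbs the bound `C + C * M` below
  obtain ⟨K, hK⟩ := exists_nat_gt (3 * C + 2)
  set M := 1 + ∑ k ∈ range K, x k
  have hM : 1 ≤ M := le_add_of_nonneg_right (sum_nonneg fun k _ => hx0 k)
  refine ⟨M, fun k => ?_⟩
  induction k using Nat.strong_induction_on with
  | _ k ih =>
  rcases lt_or_ge k K with hk | hk
  · exact (single_le_sum (fun k _ => hx0 k) (mem_range.2 hk)).trans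
      (le_add_of_nonneg_left zero_le_one)
  obtain ⟨m, rfl⟩ : ∃ m, k = m + 1 :=
    Nat.exists_eq_add_one.2 (lt_of_lt_of_le (by exact_mod_cast (by linarith : (0 : ℝ) < K)) hk)
  have hgeom : ∑ i ∈ range (m + 1), (1 / 2 : ℝ) ^ (i + 1) ≤ 1 := by
    simp_rw [pow_succ, ← sum_mul]
    linarith [sum_geometric_two_le (m + 1)]
  have htail : ∑ p ∈ antidiagonal m, c (p.1 + 1) * x p.2 ≤ C * M := by
    calc ∑ p ∈ antidiagonal m, c (p.1 + 1) * x p.2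
        ≤ ∑ p ∈ antidiagonal m, C * M * (1 / 2) ^ (p.1 + 1) := by
          refine sum_le_sum fun p hp => ?_
          have hpm : p.2 < m + 1 := Nat.antidiagonal.snd_lt hp
          calc c (p.1 + 1) * x p.2 ≤ C * (1 / 2) ^ (p.1 + 1) * M :=
                mul_le_mul (hc _) (ih _ hpm) (hx0 _) (by positivity)
            _ = C * M * (1 / 2) ^ (p.1 + 1) := by ring
      _ = C * M * ∑ i ∈ range (m + 1), (1 / 2) ^ (i + 1) := by
          rw [← mul_sum, Nat.sum_antidiagonal_eq_sum_range_succ_mk]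
      _ ≤ C * M := mul_le_of_le_one_right (by positivity) hgeom
  have hkx := hrec (m + 1)
  rw [Nat.sum_antidiagonal_succ] at hkx
  have hdiag : c 0 * x (m + 1) ≤ C * x (m + 1) :=
    mul_le_mul_of_nonneg_right (by simpa using hc 0) (hx0 _)
  have hKm : (K : ℝ) ≤ (m + 1 : ℕ) := by exact_mod_cast hk
  have hmul : (2 * C + 2) * x (m + 1) ≤ (2 * C + 2) * M := by
    nlinarith [hx0 (m + 1)]
  exact le_of_mul_le_mul_left hmul (by positivity)

theorem exists_mul_half_pow_le_of_natCast_mul_le_convolution {a β w : ℕ → ℝ} {r C : ℝ}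
    (hr : 0 < r) (ha0 : ∀ p, 0 ≤ a p) (hβ0 : ∀ k, 0 ≤ β k) (hw0 : ∀ k, 0 ≤ w k)
    (ha : ∀ p, a p * r ^ p ≤ C) (hβ : ∀ k, β k * r ^ k ≤ C)
    (hrec : ∀ k : ℕ, k * w k ≤ β k + ∑ p ∈ antidiagonal k, a p.1 * w p.2) :
    ∃ M, ∀ k, w k * (r / 2) ^ k ≤ M := by
  refine exists_le_of_natCast_mul_le_geometric_convolution (C := C)
    (c := fun p => a p * (r / 2) ^ p)
    (fun p => by have := ha0 p; positivity) (fun k => by have := hw0 k; positivity)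
    (fun p => ?_) (fun k => ?_)
  · calc a p * (r / 2) ^ p = a p * r ^ p * (1 / 2) ^ p := by rw [div_pow, div_pow]; ring
      _ ≤ C * (1 / 2) ^ p := by gcongr; exact ha p
  · calc (k : ℝ) * (w k * (r / 2) ^ k) = k * w k * (r / 2) ^ k := by ring
      _ ≤ (β k + ∑ p ∈ antidiagonal k, a p.1 * w p.2) * (r / 2) ^ k := by gcongr; exact hrec k
      _ = β k * (r / 2) ^ k
            + ∑ p ∈ antidiagonal k, a p.1 * (r / 2) ^ p.1 * (w p.2 * (r / 2) ^ p.2) := by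
          rw [add_mul, sum_mul]
          congr 1
          refine sum_congr rfl fun p hp => ?_
          rw [← mem_antidiagonal.1 hp, pow_add]
          ring
      _ ≤ C + ∑ p ∈ antidiagonal k, a p.1 * (r / 2) ^ p.1 * (w p.2 * (r / 2) ^ p.2) := by
          gcongr
          calc β k * (r / 2) ^ k ≤ β k * r ^ k := by gcongr; exacts [hβ0 k, by linarith]
            _ ≤ C := hβ k

theorem natCast_mul_norm_le {𝕜 ι : Type*} [RCLike 𝕜] [Fintype ι] {A : ℕ → Matrix ι ι 𝕜}
    {b u : ℕ → ι → 𝕜} {k : ℕ}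
    (h : (k : 𝕜) • u k + ∑ p ∈ antidiagonal k, A p.1 *ᵥ u p.2 = b k) :
    k * ‖u k‖ ≤ ‖b k‖ + ∑ p ∈ antidiagonal k, (∑ i, ∑ j, ‖A p.1 i j‖) * ‖u p.2‖ :=
  calc (k : ℝ) * ‖u k‖ = ‖b k - ∑ p ∈ antidiagonal k, A p.1 *ᵥ u p.2‖ := by
        rw [← h, add_sub_cancel_right, norm_smul, RCLike.norm_natCast]
    _ ≤ ‖b k‖ + ∑ p ∈ antidiagonal k, ‖A p.1 *ᵥ u p.2‖ :=
        (norm_sub_le _ _).trans (add_le_add le_rfl (norm_sum_le _ _))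
    _ ≤ _ := by gcongr with p; exact norm_mulVec_le_sum_norm_mul _ _

/-- Lemma on regular differential equations: any formal power series solution `u`
(vector-valued, coefficients `u k : Fin n → ℂ`) of `t·u'(t) + A(t)·u(t) = b(t)`,
where `A` and `b` are holomorphic at `0` (their coefficient series have positive
radius of convergence), is itself holomorphic at `0` (has positive radius of
convergence). The equation is understood coefficientwise:
the coefficient of `t^k` in `t·u'` is `k • u k`, and in `A·u` it is the convolution. -/
theorem stmt_2 (n : ℕ) (A : ℕ → Matrix (Fin n) (Fin n) ℂ) (bv u : ℕ → Fin n → ℂ)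
    (hA : ∃ r : ℝ, 0 < r ∧ ∀ i j, Summable fun k => ‖A k i j‖ * r ^ k)
    (hb : ∃ r : ℝ, 0 < r ∧ ∀ i, Summable fun k => ‖bv k i‖ * r ^ k)
    (heq : ∀ k : ℕ, (k : ℂ) • u k +
      ∑ p ∈ Finset.HasAntidiagonal.antidiagonal k, (A p.1).mulVec (u p.2) = bv k) :
    ∃ r : ℝ, 0 < r ∧ ∀ i, Summable fun k => ‖u k i‖ * r ^ k := by
  obtain ⟨rA, hrA, hAs⟩ := hA
  obtain ⟨rb, hrb, hbs⟩ := hb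
  set r := min rA rb
  have hr : 0 < r := lt_min hrA hrb
  set C := max (∑ ij : Fin n × Fin n, ∑' k, ‖A k ij.1 ij.2‖ * rA ^ k)
    (∑ i, ∑' k, ‖bv k i‖ * rb ^ k)
  have ha : ∀ p, (∑ i, ∑ j, ‖A p i j‖) * r ^ p ≤ C := fun p => by
    rw [← Fintype.sum_prod_type']
    exact (sum_mul_pow_le_sum_tsum (g := fun (ij : Fin n × Fin n) k => ‖A k ij.1 ij.2‖)
      (r := rA) (s := r) (fun _ _ => norm_nonneg _) hr.le (min_le_left _ _)
      (fun ij => hAs ij.1 ij.2) p).trans (le_max_left _ _)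
  have hβ : ∀ k, ‖bv k‖ * r ^ k ≤ C := fun k =>
    (mul_le_mul_of_nonneg_right (pi_norm_le_sum_norm _) (by positivity)).trans
      ((sum_mul_pow_le_sum_tsum (g := fun i k => ‖bv k i‖) (r := rb) (s := r)
        (fun _ _ => norm_nonneg _) hr.le (min_le_right _ _) hbs k).trans (le_max_right _ _))
  obtain ⟨M, hM⟩ := exists_mul_half_pow_le_of_natCast_mul_le_convolution
    (a := fun p => ∑ i, ∑ j, ‖A p i j‖) (β := fun k => ‖bv k‖) (w := fun k => ‖u k‖) hr
    (fun _ => by positivity) (fun _ => norm_nonneg _) (fun _ => norm_nonneg _) ha hβ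
    fun k => natCast_mul_norm_le (heq k)
  refine ⟨r / 4, by positivity, fun i => summable_mul_pow_of_mul_pow_le (M := M)
    (fun _ => norm_nonneg _) (by positivity) (by linarith : r / 4 < r / 2) fun k => ?_⟩
  exact (mul_le_mul_of_nonneg_right (norm_le_pi_norm (u k) i) (by positivity)).trans (hM k)
end

section
/- Let f ∈ ℂ{t} be a unit and r ∈ ℤ_{≥1}. There is a unique constant c ∈ ℂ such that the equation t·τ' + r·τ = τ²·f·(1 + c·t^r·τ) admits a formal solution τ ∈ ℂ[[t]] with τ(0) ≠ 0; namely c = −(1/(τ₀³ f₀))·∑_{j+k+p=r, k,p ≤ r−1} f_j τ_k τ_p where τ₀,...,τ_{r−1} are the coefficients determined inductively by τ₀ = r/f₀ and τ_n = (1/(n−r))∑_{j+k+p=n, k,p≤n−1} f_j τ_k τ_p. -/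
open Finset

/-- Coefficient of `t^n` in `f·τ²` (convolution). -/
noncomputable def coeffFTau2 (f τ : ℕ → ℂ) (n : ℕ) : ℂ :=
  ∑ p ∈ Finset.HasAntidiagonal.antidiagonal n, ∑ q ∈ Finset.HasAntidiagonal.antidiagonal p.2, f p.1 * τ q.1 * τ q.2

/-- Coefficient of `t^n` in `f·τ³` (convolution). -/
noncomputable def coeffFTau3 (f τ : ℕ → ℂ) (n : ℕ) : ℂ :=
  ∑ p ∈ Finset.HasAntidiagonal.antidiagonal n, ∑ q ∈ Finset.HasAntidiagonal.antidiagonal p.2,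
    ∑ w ∈ Finset.HasAntidiagonal.antidiagonal q.2, f p.1 * τ q.1 * τ w.1 * τ w.2

/-- The coefficientwise form of `t·τ' + r·τ = τ²·f·(1 + c·t^r·τ)` at degree `n`. -/
def tauEqnCoeff (f τ : ℕ → ℂ) (r : ℕ) (c : ℂ) (n : ℕ) : Prop :=
  (n : ℂ) * τ n + (r : ℂ) * τ n =
    coeffFTau2 f τ n + c * (if r ≤ n then coeffFTau3 f τ (n - r) else 0)

/-- The restricted sum `∑_{j+k+p=n, k,p ≤ n-1} f_j τ_k τ_p`. -/
noncomputable def restrSum (f τ : ℕ → ℂ) (n : ℕ) : ℂ :=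
  ∑ p ∈ Finset.HasAntidiagonal.antidiagonal n,
    ∑ q ∈ (Finset.HasAntidiagonal.antidiagonal p.2).filter (fun q => q.1 ≤ n - 1 ∧ q.2 ≤ n - 1),
      f p.1 * τ q.1 * τ q.2

/-!
With `f₀ τ₀ = r` forced by degree `0`, the only terms of `[tⁿ] f τ²` containing `τₙ` are
`2 f₀ τ₀ τₙ = 2 r τₙ`, so the equation in degree `n ≥ 1` reads
`(n - r) τₙ = ∑_{j+k+p=n, k,p<n} f_j τ_k τ_p + c [t^{n-r}] f τ³`, the last term only for `n ≥ r`.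
For `n < r` this determines `τₙ` from the lower coefficients; for `n > r` likewise, for any `c`.
In degree `r` the left side vanishes and the equation becomes
`0 = ∑_{j+k+p=r, k,p<r} f_j τ_k τ_p + c τ₀³ f₀`,
which pins down `c` and leaves `τ_r` free.
-/

section Convolutions

variable (f : ℕ → ℂ)

lemma restrSum_congr {τ σ : ℕ → ℂ} (n : ℕ) (h : ∀ k ≤ n - 1, τ k = σ k) :
    restrSum f τ n = restrSum f σ n := by
  refine sum_congr rfl fun p _ => sum_congr rfl fun q hq => ?_
  obtain ⟨-, h₁, h₂⟩ := mem_filter.mp hq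
  rw [h _ h₁, h _ h₂]

lemma coeffFTau3_congr {τ σ : ℕ → ℂ} (m : ℕ) (h : ∀ k ≤ m, τ k = σ k) :
    coeffFTau3 f τ m = coeffFTau3 f σ m := by
  refine sum_congr rfl fun p hp => sum_congr rfl fun q hq => sum_congr rfl fun w hw => ?_
  rw [HasAntidiagonal.mem_antidiagonal] at hp hq hw
  rw [h q.1 (by omega), h w.1 (by omega), h w.2 (by omega)]

variable (τ : ℕ → ℂ)

lemma coeffFTau2_zero : coeffFTau2 f τ 0 = f 0 * τ 0 * τ 0 := by
  simp [coeffFTau2]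

lemma coeffFTau3_zero : coeffFTau3 f τ 0 = τ 0 ^ 3 * f 0 := by
  simp [coeffFTau3]
  ring

lemma coeffFTau2_eq_restrSum_add {n : ℕ} (hn : n ≠ 0) :
    coeffFTau2 f τ n = restrSum f τ n + 2 * (f 0 * τ 0) * τ n := by
  have hmem : ((0 : ℕ), n) ∈ HasAntidiagonal.antidiagonal n := by simp
  have hcorner : (HasAntidiagonal.antidiagonal n).filter
      (fun q : ℕ × ℕ => ¬(q.1 ≤ n - 1 ∧ q.2 ≤ n - 1)) = {(n, 0), (0, n)} := by
    ext ⟨a, b⟩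
    simp only [mem_filter, HasAntidiagonal.mem_antidiagonal, mem_insert, mem_singleton,
      Prod.mk.injEq]
    omega
  have hhead : ∑ q ∈ HasAntidiagonal.antidiagonal n, f 0 * τ q.1 * τ q.2 =
      ∑ q ∈ (HasAntidiagonal.antidiagonal n).filter (fun q => q.1 ≤ n - 1 ∧ q.2 ≤ n - 1),
        f 0 * τ q.1 * τ q.2 + 2 * (f 0 * τ 0) * τ n := by
    rw [← sum_filter_add_sum_filter_not _ (fun q : ℕ × ℕ => q.1 ≤ n - 1 ∧ q.2 ≤ n - 1),
      hcorner,
      sum_pair (by simp only [ne_eq, Prod.mk.injEq]; omega)]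
    ring
  have htail : ∀ p ∈ (HasAntidiagonal.antidiagonal n).erase (0, n),
      ∑ q ∈ HasAntidiagonal.antidiagonal p.2, f p.1 * τ q.1 * τ q.2 =
        ∑ q ∈ (HasAntidiagonal.antidiagonal p.2).filter
          (fun q => q.1 ≤ n - 1 ∧ q.2 ≤ n - 1), f p.1 * τ q.1 * τ q.2 := by
    refine fun p hp => (sum_filter_of_ne fun q hq _ => ?_).symm
    obtain ⟨hne, hp⟩ := mem_erase.mp hp
    rw [HasAntidiagonal.mem_antidiagonal] at hp hq
    have : p.1 ≠ 0 := fun h => hne (Prod.ext h (by omega))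
    omega
  unfold coeffFTau2 restrSum
  rw [← add_sum_erase _ _ hmem, sum_congr rfl htail]
  dsimp only
  rw [hhead, ← add_sum_erase _ _ hmem]
  ring

end Convolutions

lemma natCast_sub_natCast_ne_zero {m n : ℕ} (h : m ≠ n) : (m : ℂ) - n ≠ 0 :=
  sub_ne_zero.mpr (Nat.cast_injective.ne h)

section Equation

variable {f τ : ℕ → ℂ} {r n : ℕ} {c : ℂ}

lemma tauEqnCoeff_zero_iff (hr : r ≠ 0) (hτ0 : τ 0 ≠ 0) :
    tauEqnCoeff f τ r c 0 ↔ f 0 * τ 0 = r := by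
  rw [tauEqnCoeff, if_neg (by omega), coeffFTau2_zero]
  constructor
  · intro h
    apply mul_right_cancel₀ hτ0
    linear_combination -h
  · intro h
    linear_combination -τ 0 * h

lemma tauEqnCoeff_iff (hn : n ≠ 0) (h0 : f 0 * τ 0 = r) :
    tauEqnCoeff f τ r c n ↔
      ((n : ℂ) - r) * τ n =
        restrSum f τ n + c * (if r ≤ n then coeffFTau3 f τ (n - r) else 0) := by
  rw [tauEqnCoeff, coeffFTau2_eq_restrSum_add f τ hn, h0]
  constructor <;> intro h <;> linear_combination h

lemma tauEqnCoeff_iff_of_lt (hn : n ≠ 0) (hnr : n < r) (h0 : f 0 * τ 0 = r) :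
    tauEqnCoeff f τ r c n ↔ τ n = 1 / ((n : ℂ) - r) * restrSum f τ n := by
  rw [tauEqnCoeff_iff hn h0, if_neg (by omega), mul_zero, add_zero, one_div_mul_eq_div,
    eq_div_iff (natCast_sub_natCast_ne_zero hnr.ne), mul_comm]

lemma tauEqnCoeff_self_iff (hr : r ≠ 0) (h0 : f 0 * τ 0 = r) :
    tauEqnCoeff f τ r c r ↔ restrSum f τ r + c * (τ 0 ^ 3 * f 0) = 0 := by
  rw [tauEqnCoeff_iff hr h0, if_pos le_rfl, Nat.sub_self, coeffFTau3_zero, sub_self, zero_mul,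
    eq_comm]

lemma tauEqnCoeff_iff_of_gt (hnr : r < n) (h0 : f 0 * τ 0 = r) :
    tauEqnCoeff f τ r c n ↔
      τ n = 1 / ((n : ℂ) - r) * (restrSum f τ n + c * coeffFTau3 f τ (n - r)) := by
  rw [tauEqnCoeff_iff (by omega) h0, if_pos hnr.le, one_div_mul_eq_div,
    eq_div_iff (natCast_sub_natCast_ne_zero hnr.ne'), mul_comm]

lemma eq_of_tauEqnCoeff_of_lt {σ : ℕ → ℂ} (hr : r ≠ 0) (h0 : f 0 * τ 0 = r)
    (heq : ∀ n < r, tauEqnCoeff f τ r c n) (hσ0 : σ 0 = r / f 0)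
    (hσ : ∀ n : ℕ, 1 ≤ n → n < r → σ n = 1 / ((n : ℂ) - r) * restrSum f σ n) :
    ∀ n < r, τ n = σ n := by
  intro n
  induction n using Nat.strong_induction_on with
  | _ n ih =>
    intro hnr
    rcases Nat.eq_zero_or_pos n with rfl | hn
    · have hf0 : f 0 ≠ 0 := left_ne_zero_of_mul (h0 ▸ Nat.cast_ne_zero.mpr hr)
      rw [hσ0, eq_div_iff hf0, mul_comm, h0]
    · rw [(tauEqnCoeff_iff_of_lt hn.ne' hnr h0).mp (heq n hnr), hσ n hn hnr,
        restrSum_congr f n fun k hk => ih k (by omega) (by omega)]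

end Equation

/-- The equation does not constrain `τ_r`; here `τ_r = 0`, through the division by `n - r = 0`. -/
noncomputable def extendTau (f τfix : ℕ → ℂ) (r : ℕ) (c : ℂ) (n : ℕ) : ℂ :=
  if n < r then τfix n
  else (1 / ((n : ℂ) - r)) *
    (restrSum f (fun k => if k < n then extendTau f τfix r c k else 0) n
      + c * coeffFTau3 f (fun k => if k < n then extendTau f τfix r c k else 0) (n - r))
decreasing_by all_goals assumption

section Extension

variable {f τfix : ℕ → ℂ} {r n : ℕ} {c : ℂ}

lemma extendTau_of_lt (h : n < r) : extendTau f τfix r c n = τfix n := by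
  rw [extendTau, if_pos h]

lemma extendTau_of_gt (hr : r ≠ 0) (h : r < n) :
    extendTau f τfix r c n = 1 / ((n : ℂ) - r) * (restrSum f (extendTau f τfix r c) n +
      c * coeffFTau3 f (extendTau f τfix r c) (n - r)) := by
  rw [extendTau, if_neg (by omega),
    restrSum_congr f n fun k hk => if_pos (by omega),
    coeffFTau3_congr f (n - r) fun k hk => if_pos (by omega)]

lemma tauEqnCoeff_extendTau (hr : r ≠ 0) (h0 : f 0 * τfix 0 = r)
    (hτfix : ∀ n : ℕ, 1 ≤ n → n < r → τfix n = 1 / ((n : ℂ) - r) * restrSum f τfix n)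
    (hc : restrSum f τfix r + c * (τfix 0 ^ 3 * f 0) = 0) :
    ∀ n, tauEqnCoeff f (extendTau f τfix r c) r c n := by
  have hagree : ∀ k ≤ r - 1, extendTau f τfix r c k = τfix k := fun k hk =>
    extendTau_of_lt (by omega)
  have h0' : f 0 * extendTau f τfix r c 0 = r := by rw [hagree 0 (by omega), h0]
  intro n
  rcases Nat.lt_trichotomy n r with hnr | rfl | hnr
  · rcases Nat.eq_zero_or_pos n with rfl | hn
    · have hτ0 := right_ne_zero_of_mul (h0' ▸ Nat.cast_ne_zero.mpr hr)
      exact (tauEqnCoeff_zero_iff hr hτ0).mpr h0'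
    · rw [tauEqnCoeff_iff_of_lt hn.ne' hnr h0', hagree n (by omega), hτfix n hn hnr,
        restrSum_congr f n fun k hk => hagree k (by omega)]
  · rwa [tauEqnCoeff_self_iff hr h0', restrSum_congr f n hagree, hagree 0 (by omega)]
  · exact (tauEqnCoeff_iff_of_gt hnr h0').mpr (extendTau_of_gt hr hnr)

end Extension

theorem stmt_4_general (f : ℕ → ℂ)
    (hf0 : f 0 ≠ 0) (r : ℕ) (hr : 1 ≤ r) (τfix : ℕ → ℂ)
    (hτfix0 : τfix 0 = (r : ℂ) / f 0)
    (hτfixn : ∀ n : ℕ, 1 ≤ n → n < r →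
      τfix n = (1 / ((n : ℂ) - (r : ℂ))) * restrSum f τfix n)
    (cval : ℂ)
    (hcval : cval = -(1 / (τfix 0 ^ 3 * f 0)) * restrSum f τfix r) :
    (∃ τ : ℕ → ℂ, τ 0 ≠ 0 ∧ ∀ n, tauEqnCoeff f τ r cval n) ∧
    ∀ c : ℂ, (∃ τ : ℕ → ℂ, τ 0 ≠ 0 ∧ ∀ n, tauEqnCoeff f τ r c n) → c = cval := by
  have hr0 : r ≠ 0 := by omega
  have h0 : f 0 * τfix 0 = r := by rw [hτfix0, mul_div_cancel₀ _ hf0]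
  have hτfix0_ne : τfix 0 ≠ 0 := right_ne_zero_of_mul (h0 ▸ Nat.cast_ne_zero.mpr hr0)
  have hc : ∀ c, restrSum f τfix r + c * (τfix 0 ^ 3 * f 0) = 0 ↔ c = cval := fun c => by
    have ha : τfix 0 ^ 3 * f 0 ≠ 0 := mul_ne_zero (pow_ne_zero 3 hτfix0_ne) hf0
    rw [hcval, neg_mul, one_div_mul_eq_div, eq_neg_iff_add_eq_zero, add_div' _ _ _ ha,
      div_eq_zero_iff, or_iff_left ha, add_comm]
  refine ⟨⟨extendTau f τfix r cval, ?_, ?_⟩, ?_⟩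
  · rwa [extendTau_of_lt (by omega)]
  · exact tauEqnCoeff_extendTau hr0 h0 hτfixn ((hc cval).mpr rfl)
  · rintro c ⟨τ, hτ0, heq⟩
    have hτ0_mul : f 0 * τ 0 = r := (tauEqnCoeff_zero_iff hr0 hτ0).mp (heq 0)
    have hagree := eq_of_tauEqnCoeff_of_lt hr0 hτ0_mul (fun n _ => heq n) hτfix0 hτfixn
    rw [← hc, ← hagree 0 (by omega), ← restrSum_congr f r fun k hk => hagree k (by omega)]
    exact (tauEqnCoeff_self_iff hr0 hτ0_mul).mp (heq r)

/-- Lemma `de-adaugat` (uniqueness of `c`): for `f ∈ ℂ{t}` a unit and `r ≥ 1`, there is a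
unique `c ∈ ℂ` for which `t·τ' + r·τ = τ²·f·(1 + c·t^r·τ)` admits a formal solution `τ`
with `τ 0 ≠ 0`; namely `c = -(1/(τ₀³ f₀))·∑_{j+k+p=r, k,p≤r-1} f_j τ_k τ_p`, where
`τ₀, …, τ_{r-1}` are determined inductively by `τ₀ = r/f₀` and
`τ_n = (1/(n-r)) ∑_{j+k+p=n, k,p≤n-1} f_j τ_k τ_p` for `1 ≤ n < r`. -/
theorem stmt_4 (f : ℕ → ℂ) (hfconv : ∃ R : ℝ, 0 < R ∧ Summable fun k => ‖f k‖ * R ^ k)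
    (hf0 : f 0 ≠ 0) (r : ℕ) (hr : 1 ≤ r) (τfix : ℕ → ℂ)
    (hτfix0 : τfix 0 = (r : ℂ) / f 0)
    (hτfixn : ∀ n : ℕ, 1 ≤ n → n < r →
      τfix n = (1 / ((n : ℂ) - (r : ℂ))) * restrSum f τfix n)
    (cval : ℂ)
    (hcval : cval = -(1 / (τfix 0 ^ 3 * f 0)) * restrSum f τfix r) :
    (∃ τ : ℕ → ℂ, τ 0 ≠ 0 ∧ ∀ n, tauEqnCoeff f τ r cval n) ∧
    ∀ c : ℂ, (∃ τ : ℕ → ℂ, τ 0 ≠ 0 ∧ ∀ n, tauEqnCoeff f τ r c n) → c = cval :=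
  stmt_4_general f hf0 r hr τfix hτfix0 hτfixn cval hcval
end

section
/- Let m ∈ ℂ*, λ ∈ ℂ, b(t) = λt + 1, and g(t) = g₂t² + g₁t + g₀. Consider the system m·x + b'·x − b·x' = g with x''' = 0 in the unknown polynomial x of degree ≤ 2. If m ∉ {λ, −λ} there is a unique solution. If m = λ, a solution exists iff g₂ = 0. If m = −λ, a solution exists iff m²g₀ + m·g₁ + g₂ = 0. -/
open Polynomial

/-! With `b = λX + 1`, the operator `x ↦ m x + b' x − b x'` maps `a₂X² + a₁X + a₀` to
`(m − λ)a₂X² + (m a₁ − 2a₂)X + ((m + λ)a₀ − a₁)`, so on quadratics the system is upper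
triangular with pivots `m − λ`, `m`, `m + λ`. When all pivots are nonzero it is uniquely
solvable by back substitution; when `m = ±λ` one pivot vanishes and the corresponding
combination of the equations gives the compatibility condition on `g`. -/

/-- `x` is a solution of the system `m·x + b'·x − b·x' = g`, `x''' = 0`
(i.e. `x` is a polynomial of degree at most 2). -/
def IsSol (m : ℂ) (b g x : Polynomial ℂ) : Prop :=
  x.degree ≤ 2 ∧
    Polynomial.C m * x + (Polynomial.derivative b) * x - b * (Polynomial.derivative x) = g

theorem quadratic_eq_quadratic_iff {R : Type*} [Semiring R] {a₂ a₁ a₀ b₂ b₁ b₀ : R} :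
    C a₂ * X ^ 2 + C a₁ * X + C a₀ = C b₂ * X ^ 2 + C b₁ * X + C b₀ ↔
      a₂ = b₂ ∧ a₁ = b₁ ∧ a₀ = b₀ := by
  refine ⟨fun h => ⟨?_, ?_, ?_⟩, by rintro ⟨rfl, rfl, rfl⟩; rfl⟩
  · simpa using congr_arg (coeff · 2) h
  · simpa using congr_arg (coeff · 1) h
  · simpa using congr_arg (coeff · 0) h

section

variable (m lam g₀ g₁ g₂ : ℂ)

theorem isSol_quadratic_iff (a₂ a₁ a₀ : ℂ) :
    IsSol m (C lam * X + 1) (C g₂ * X ^ 2 + C g₁ * X + C g₀) (C a₂ * X ^ 2 + C a₁ * X + C a₀) ↔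
      (m - lam) * a₂ = g₂ ∧ m * a₁ - 2 * a₂ = g₁ ∧ (m + lam) * a₀ - a₁ = g₀ := by
  have image : C m * (C a₂ * X ^ 2 + C a₁ * X + C a₀)
      + derivative (C lam * X + 1) * (C a₂ * X ^ 2 + C a₁ * X + C a₀)
      - (C lam * X + 1) * derivative (C a₂ * X ^ 2 + C a₁ * X + C a₀)
      = C ((m - lam) * a₂) * X ^ 2 + C (m * a₁ - 2 * a₂) * X + C ((m + lam) * a₀ - a₁) := by
    simp only [derivative_mul, derivative_C, derivative_X, derivative_one,
      derivative_X_pow, map_mul, map_add, map_sub, Nat.cast_ofNat, map_ofNat]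
    ring
  rw [IsSol, and_iff_right (by compute_degree), image, quadratic_eq_quadratic_iff]

theorem isSol_iff_coeff (x : ℂ[X]) :
    IsSol m (C lam * X + 1) (C g₂ * X ^ 2 + C g₁ * X + C g₀) x ↔
      x.degree ≤ 2 ∧ (m - lam) * x.coeff 2 = g₂ ∧ m * x.coeff 1 - 2 * x.coeff 2 = g₁ ∧
        (m + lam) * x.coeff 0 - x.coeff 1 = g₀ := by
  by_cases hx : x.degree ≤ 2
  · have h := isSol_quadratic_iff m lam g₀ g₁ g₂ (x.coeff 2) (x.coeff 1) (x.coeff 0)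
    rw [← eq_quadratic_of_degree_le_two hx] at h
    exact ⟨fun hs => ⟨hx, h.1 hs⟩, fun hs => h.2 hs.2⟩
  · exact iff_of_false (fun hs => hx hs.1) (fun hs => hx hs.1)

theorem exists_isSol_iff :
    (∃ x, IsSol m (C lam * X + 1) (C g₂ * X ^ 2 + C g₁ * X + C g₀) x) ↔
      ∃ a₂ a₁ a₀ : ℂ, (m - lam) * a₂ = g₂ ∧ m * a₁ - 2 * a₂ = g₁ ∧ (m + lam) * a₀ - a₁ = g₀ := by
  constructor
  · rintro ⟨x, hx⟩
    exact ⟨_, _, _, ((isSol_iff_coeff m lam g₀ g₁ g₂ x).1 hx).2⟩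
  · rintro ⟨a₂, a₁, a₀, h⟩
    exact ⟨_, (isSol_quadratic_iff m lam g₀ g₁ g₂ a₂ a₁ a₀).2 h⟩

variable {m lam}

theorem existsUnique_isSol (hm : m ≠ 0) (hm₁ : m ≠ lam) (hm₂ : m ≠ -lam) :
    ∃! x, IsSol m (C lam * X + 1) (C g₂ * X ^ 2 + C g₁ * X + C g₀) x := by
  have hsub : m - lam ≠ 0 := sub_ne_zero.2 hm₁
  have hadd : m + lam ≠ 0 := fun h => hm₂ (eq_neg_of_add_eq_zero_left h)
  obtain ⟨x, hx⟩ : ∃ x, IsSol m (C lam * X + 1) (C g₂ * X ^ 2 + C g₁ * X + C g₀) x := by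
    obtain ⟨a₂, h₂⟩ : ∃ a, (m - lam) * a = g₂ := ⟨_, mul_div_cancel₀ _ hsub⟩
    obtain ⟨a₁, h₁⟩ : ∃ a, m * a = g₁ + 2 * a₂ := ⟨_, mul_div_cancel₀ _ hm⟩
    obtain ⟨a₀, h₀⟩ : ∃ a, (m + lam) * a = g₀ + a₁ := ⟨_, mul_div_cancel₀ _ hadd⟩
    exact (exists_isSol_iff m lam g₀ g₁ g₂).2
      ⟨a₂, a₁, a₀, h₂, by rw [h₁]; ring, by rw [h₀]; ring⟩
  refine ⟨x, hx, fun y hy => ?_⟩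
  obtain ⟨hx, ex₂, ex₁, ex₀⟩ := (isSol_iff_coeff m lam g₀ g₁ g₂ x).1 hx
  obtain ⟨hy, ey₂, ey₁, ey₀⟩ := (isSol_iff_coeff m lam g₀ g₁ g₂ y).1 hy
  have h₂ : y.coeff 2 = x.coeff 2 := mul_left_cancel₀ hsub (ey₂.trans ex₂.symm)
  have h₁ : y.coeff 1 = x.coeff 1 := mul_left_cancel₀ hm (by linear_combination ey₁ - ex₁ + 2 * h₂)
  have h₀ : y.coeff 0 = x.coeff 0 := mul_left_cancel₀ hadd (by linear_combination ey₀ - ex₀ + h₁)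
  rw [ext_iff_degree_le hy hx]
  intro i hi
  interval_cases i <;> assumption

theorem exists_isSol_iff_of_eq (hm : m ≠ 0) :
    (∃ x, IsSol m (C m * X + 1) (C g₂ * X ^ 2 + C g₁ * X + C g₀) x) ↔ g₂ = 0 := by
  rw [exists_isSol_iff]
  refine ⟨fun ⟨a₂, _, _, h₂, _⟩ => by simpa using h₂.symm, fun hg => ?_⟩
  refine ⟨0, g₁ / m, (g₀ + g₁ / m) / (m + m), by simp [hg], ?_, ?_⟩ <;> field_simp <;> ring

theorem exists_isSol_iff_of_eq_neg (hm : m ≠ 0) :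
    (∃ x, IsSol m (C (-m) * X + 1) (C g₂ * X ^ 2 + C g₁ * X + C g₀) x) ↔
      m ^ 2 * g₀ + m * g₁ + g₂ = 0 := by
  rw [exists_isSol_iff]
  refine ⟨fun ⟨a₂, a₁, a₀, h₂, h₁, h₀⟩ => ?_, fun hg => ?_⟩
  · linear_combination -m ^ 2 * h₀ - m * h₁ - h₂
  · refine ⟨g₂ / (2 * m), (g₁ + g₂ / m) / m, 0, ?_, ?_, ?_⟩
    · field_simp; ring
    · field_simp; ring
    · field_simp; linear_combination -hg

end

/-- Lemma `third-der` ii): with `b(t) = λt + 1` (`λ ∈ ℂ`), `g = g₂t² + g₁t + g₀`, `m ≠ 0`: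
if `m ∉ {λ, -λ}` the system has a unique solution; if `m = λ` a solution exists iff
`g₂ = 0`; if `m = -λ` a solution exists iff `m²g₀ + m g₁ + g₂ = 0`. -/
theorem stmt_6 (m lam g0 g1 g2 : ℂ) (hm : m ≠ 0) :
    (m ≠ lam → m ≠ -lam →
      ∃! x : Polynomial ℂ, IsSol m (Polynomial.C lam * Polynomial.X + 1)
        (Polynomial.C g2 * Polynomial.X ^ 2 + Polynomial.C g1 * Polynomial.X
          + Polynomial.C g0) x) ∧
    (m = lam →
      ((∃ x : Polynomial ℂ, IsSol m (Polynomial.C lam * Polynomial.X + 1)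
        (Polynomial.C g2 * Polynomial.X ^ 2 + Polynomial.C g1 * Polynomial.X
          + Polynomial.C g0) x) ↔ g2 = 0)) ∧
    (m = -lam →
      ((∃ x : Polynomial ℂ, IsSol m (Polynomial.C lam * Polynomial.X + 1)
        (Polynomial.C g2 * Polynomial.X ^ 2 + Polynomial.C g1 * Polynomial.X
          + Polynomial.C g0) x) ↔ m ^ 2 * g0 + m * g1 + g2 = 0)) := by
  refine ⟨existsUnique_isSol g0 g1 g2 hm, fun h => ?_, fun h => ?_⟩
  · subst h
    exact exists_isSol_iff_of_eq g0 g1 g2 hm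
  · obtain rfl : lam = -m := by rw [h, neg_neg]
    exact exists_isSol_iff_of_eq_neg g0 g1 g2 hm
end

section
/- A holomorphic vector field E = f·∂₁ + g·∂₂ on the germ 𝒩₂ = (ℂ²,0) with multiplication ∂₁∘∂₁ = ∂₁, ∂₁∘∂₂ = ∂₂, ∂₂∘∂₂ = 0 satisfies the Euler field equation L_E(∘) = ∘ if and only if f(t₁,t₂) = t₁ + c for some c ∈ ℂ and g depends only on t₂. -/
/-!
At a point `p`, `L_E(∘)(X, Y) - X∘Y` involves no derivative of `X` or `Y`: with `A = DE(p)` it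
equals `(A X)∘Y + X∘(A Y) - A(X∘Y) - X∘Y`. So the Euler equation says that `A - id` is a
derivation of the algebra `(ℂ², ∘) ≅ ℂ[ε]/(ε²)` (`∂₁ = 1`, `∂₂ = ε`). Such a derivation kills `1`
and maps `ε` into `ℂε`, i.e. `∂₁f = 1`, `∂₂f = 0`, `∂₁g = 0`, and this is already forced by the
pairs `(∂₁, ∂₁)` and `(∂₂, ∂₂)`. On a ball these equations integrate to `f = t₁ + c` and
`g(t₁, t₂) = g(0, t₂)`.
-/

open Filter

/-- The multiplication `∘` of vector fields on `𝒩₂ = (ℂ², 0)` determined by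
`∂₁∘∂₁ = ∂₁`, `∂₁∘∂₂ = ∂₂`, `∂₂∘∂₂ = 0`, written in components. -/
def circN2 (X Y : ℂ × ℂ → ℂ × ℂ) : ℂ × ℂ → ℂ × ℂ := fun p =>
  ((X p).1 * (Y p).1, (X p).1 * (Y p).2 + (X p).2 * (Y p).1)

/-- The Lie bracket of holomorphic vector fields on `ℂ²`:
`[X,Y](p) = (DY)_p(X(p)) − (DX)_p(Y(p))`. -/
noncomputable def lieN2 (X Y : ℂ × ℂ → ℂ × ℂ) : ℂ × ℂ → ℂ × ℂ := fun p =>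
  (fderiv ℂ Y p) (X p) - (fderiv ℂ X p) (Y p)

open Topology Metric ContinuousLinearMap

section MeanValue

variable {𝕜 E F G : Type*} [RCLike 𝕜] [NormedAddCommGroup E] [NormedSpace 𝕜 E]
  [NormedAddCommGroup F] [NormedSpace 𝕜 F] [NormedAddCommGroup G] [NormedSpace 𝕜 G]

theorem eventually_eq_add_of_eventually_hasFDerivAt {f : E → F} {L : E →L[𝕜] F} {x₀ : E}
    (h : ∀ᶠ x in 𝓝 x₀, HasFDerivAt f L x) : ∀ᶠ x in 𝓝 x₀, f x = f x₀ + L (x - x₀) := by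
  let := NormedSpace.restrictScalars ℝ 𝕜 E
  obtain ⟨r, hr, hball⟩ := eventually_nhds_iff_ball.1 h
  have haffine : ∀ x, HasFDerivAt (fun x => f x₀ + L (x - x₀)) L x := fun x => by
    simpa using ((L.hasFDerivAt).comp x ((hasFDerivAt_id x).sub_const x₀)).const_add (f x₀)
  have heq := isOpen_ball.eqOn_of_fderiv_eq isPreconnected_ball
    (fun x hx => (hball x hx).differentiableAt.differentiableWithinAt)
    (fun x _ => (haffine x).differentiableAt.differentiableWithinAt)
    (fun x hx => (hball x hx).fderiv.trans (haffine x).fderiv.symm) (mem_ball_self hr)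
    (by simp)
  exact eventually_of_mem (ball_mem_nhds x₀ hr) heq

theorem eventually_eq_apply_fst_of_comp_inl_eq_zero {g : E × F → G} {p₀ : E × F}
    (h : ∀ᶠ p in 𝓝 p₀, DifferentiableAt 𝕜 g p ∧ (fderiv 𝕜 g p).comp (inl 𝕜 E F) = 0) :
    ∀ᶠ p in 𝓝 p₀, g p = g (p₀.1, p.2) := by
  let := NormedSpace.restrictScalars ℝ 𝕜 E
  obtain ⟨r, hr, hball⟩ := eventually_nhds_iff_ball.1 h
  filter_upwards [ball_mem_nhds p₀ hr] with p hp
  rw [← ball_prod_same] at hp hball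
  have hslice : ∀ z ∈ ball p₀.1 r,
      HasFDerivAt (fun z => g (z, p.2)) ((fderiv 𝕜 g (z, p.2)).comp (inl 𝕜 E F)) z :=
    fun z hz => (hball (z, p.2) ⟨hz, hp.2⟩).1.hasFDerivAt.comp z (hasFDerivAt_prodMk_left z p.2)
  exact isOpen_ball.is_const_of_fderiv_eq_zero isPreconnected_ball
    (fun z hz => (hslice z hz).differentiableAt.differentiableWithinAt)
    (fun z hz => (hslice z hz).fderiv.trans (hball (z, p.2) ⟨hz, hp.2⟩).2) hp.1 (mem_ball_self hr)

theorem comp_inl_eq_zero_of_eventuallyEq_comp_snd {g : E × F → G} {h : F → G} {p : E × F}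
    (hg : DifferentiableAt 𝕜 g p) (hgh : g =ᶠ[𝓝 p] h ∘ Prod.snd) :
    (fderiv 𝕜 g p).comp (inl 𝕜 E F) = 0 := by
  have hslice : (fun z => g (z, p.2)) =ᶠ[𝓝 p.1] fun _ => h p.2 :=
    ((continuous_id.prodMk continuous_const).tendsto p.1).eventually hgh
  exact (hg.hasFDerivAt.comp p.1 (hasFDerivAt_prodMk_left p.1 p.2)).unique
    ((hasFDerivAt_const _ _).congr_of_eventuallyEq hslice)

end MeanValue

noncomputable def mulN2 (u v : ℂ × ℂ) : ℂ × ℂ := (u.1 * v.1, u.1 * v.2 + u.2 * v.1)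

theorem circN2_apply (X Y : ℂ × ℂ → ℂ × ℂ) (p : ℂ × ℂ) : circN2 X Y p = mulN2 (X p) (Y p) := rfl

noncomputable def lieDerivCircN2 (E X Y : ℂ × ℂ → ℂ × ℂ) : ℂ × ℂ → ℂ × ℂ :=
  lieN2 E (circN2 X Y) - circN2 (lieN2 E X) Y - circN2 X (lieN2 E Y)

noncomputable def eulerDefect (A : ℂ × ℂ →L[ℂ] ℂ × ℂ) (u v : ℂ × ℂ) : ℂ × ℂ :=
  mulN2 (A u) v + mulN2 u (A v) - A (mulN2 u v) - mulN2 u v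

theorem fderiv_circN2_apply {X Y : ℂ × ℂ → ℂ × ℂ} {p : ℂ × ℂ}
    (hX : DifferentiableAt ℂ X p) (hY : DifferentiableAt ℂ Y p) (v : ℂ × ℂ) :
    fderiv ℂ (circN2 X Y) p v = mulN2 (fderiv ℂ X p v) (Y p) + mulN2 (X p) (fderiv ℂ Y p v) := by
  have hX' := hX.hasFDerivAt
  have hY' := hY.hasFDerivAt
  have hXY : HasFDerivAt (circN2 X Y) _ p := (hX'.fst.fun_mul hY'.fst).prodMk
    ((hX'.fst.fun_mul hY'.snd).fun_add (hX'.snd.fun_mul hY'.fst))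
  rw [hXY.fderiv]
  simp only [mulN2, prod_apply, add_apply, smul_apply, comp_apply, coe_fst', coe_snd', smul_eq_mul,
    Prod.mk_add_mk]
  congr 1 <;> ring

theorem lieDerivCircN2_sub_circN2 (E : ℂ × ℂ → ℂ × ℂ) {X Y : ℂ × ℂ → ℂ × ℂ} {p : ℂ × ℂ}
    (hX : DifferentiableAt ℂ X p) (hY : DifferentiableAt ℂ Y p) :
    lieDerivCircN2 E X Y p - circN2 X Y p = eulerDefect (fderiv ℂ E p) (X p) (Y p) := by
  simp only [lieDerivCircN2, Pi.sub_apply, lieN2, circN2_apply, fderiv_circN2_apply hX hY,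
    eulerDefect, mulN2, Prod.ext_iff, Prod.fst_add, Prod.snd_add, Prod.fst_sub, Prod.snd_sub]
  constructor <;> ring

theorem eq_fst_and_comp_inl_eq_zero_of_eulerDefect {L M : ℂ × ℂ →L[ℂ] ℂ}
    (h₁ : eulerDefect (L.prod M) (1, 0) (1, 0) = 0)
    (h₂ : eulerDefect (L.prod M) (0, 1) (0, 1) = 0) :
    L = fst ℂ ℂ ℂ ∧ M.comp (inl ℂ ℂ ℂ) = 0 := by
  obtain ⟨hL₁, hM₁⟩ : L (1, 0) = 1 ∧ M (1, 0) = 0 := by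
    simpa [eulerDefect, mulN2, Prod.ext_iff, sub_eq_zero] using h₁
  have hL₂ : L (0, 1) = 0 := by
    have hsq : mulN2 (0, 1) (0, 1) = 0 := by simp [mulN2]
    rw [eulerDefect, hsq, map_zero] at h₂
    simpa [mulN2, Prod.ext_iff] using h₂
  constructor
  · ext <;> simp [hL₁, hL₂]
  · ext
    simp [hM₁]

theorem eulerDefect_fst_prod_eq_zero {M : ℂ × ℂ →L[ℂ] ℂ} (hM : M.comp (inl ℂ ℂ ℂ) = 0)
    (u v : ℂ × ℂ) :
    eulerDefect ((fst ℂ ℂ ℂ).prod M) u v = 0 := by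
  have hMu : ∀ w : ℂ × ℂ, M w = w.2 * M (0, 1) := fun w => by
    rw [← M.comp_inl_add_comp_inr, hM, zero_apply, zero_add, comp_apply, ← smul_eq_mul,
      ← map_smul]
    simp
  simp only [eulerDefect, prod_apply, coe_fst', hMu u, hMu v, hMu (mulN2 u v)]
  ext
  · simp [mulN2]
  · simp [mulN2]
    ring

theorem forall_lieDerivCircN2_eq_circN2_iff {f g : ℂ × ℂ → ℂ} {U : Set (ℂ × ℂ)} {p₀ : ℂ × ℂ}
    (hU : U ∈ 𝓝 p₀) (hf : ∀ᶠ p in 𝓝 p₀, DifferentiableAt ℂ f p)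
    (hg : ∀ᶠ p in 𝓝 p₀, DifferentiableAt ℂ g p) :
    (∀ X Y : ℂ × ℂ → ℂ × ℂ, AnalyticOnNhd ℂ X U → AnalyticOnNhd ℂ Y U →
      ∀ᶠ p in 𝓝 p₀, lieDerivCircN2 (fun q => (f q, g q)) X Y p = circN2 X Y p) ↔
    ∀ᶠ p in 𝓝 p₀, fderiv ℂ f p = fst ℂ ℂ ℂ ∧ (fderiv ℂ g p).comp (inl ℂ ℂ ℂ) = 0 := by
  have hE : ∀ᶠ p in 𝓝 p₀,
      fderiv ℂ (fun q => (f q, g q)) p = (fderiv ℂ f p).prod (fderiv ℂ g p) := by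
    filter_upwards [hf, hg] with p hfp hgp using hfp.fderiv_prodMk hgp
  constructor
  · intro H
    have hconst (u : ℂ × ℂ) : AnalyticOnNhd ℂ (fun _ => u) U := fun _ _ => analyticAt_const
    filter_upwards [hE, H _ _ (hconst (1, 0)) (hconst (1, 0)),
      H _ _ (hconst (0, 1)) (hconst (0, 1))] with p hEp h₁ h₂
    rw [← sub_eq_zero, lieDerivCircN2_sub_circN2 _ (differentiableAt_const _)
      (differentiableAt_const _), hEp] at h₁ h₂
    exact eq_fst_and_comp_inl_eq_zero_of_eulerDefect h₁ h₂
  · intro H X Y hX hY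
    filter_upwards [hE, H, hU] with p hEp ⟨hfst, hinl⟩ hpU
    rw [← sub_eq_zero, lieDerivCircN2_sub_circN2 _ (hX p hpU).differentiableAt
      (hY p hpU).differentiableAt, hEp, hfst]
    exact eulerDefect_fst_prod_eq_zero hinl _ _

theorem eventually_fderiv_eq_fst_and_comp_inl_eq_zero_iff {f g : ℂ × ℂ → ℂ} {p₀ : ℂ × ℂ}
    (hf : ∀ᶠ p in 𝓝 p₀, DifferentiableAt ℂ f p) (hg : AnalyticAt ℂ g p₀) :
    (∀ᶠ p in 𝓝 p₀, fderiv ℂ f p = fst ℂ ℂ ℂ ∧ (fderiv ℂ g p).comp (inl ℂ ℂ ℂ) = 0) ↔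
    ∃ c : ℂ, ∃ h : ℂ → ℂ, AnalyticAt ℂ h p₀.2 ∧
      ∀ᶠ p in 𝓝 p₀, f p = p.1 + c ∧ g p = h p.2 := by
  have hg' : ∀ᶠ p in 𝓝 p₀, DifferentiableAt ℂ g p :=
    hg.eventually_analyticAt.mono fun p hp => hp.differentiableAt
  constructor
  · intro H
    have hfst : ∀ᶠ p in 𝓝 p₀, f p = f p₀ + (p - p₀).1 :=
      eventually_eq_add_of_eventually_hasFDerivAt <| by
        filter_upwards [hf, H] with p hfp hp using hp.1 ▸ hfp.hasFDerivAt
    have hsnd : ∀ᶠ p in 𝓝 p₀, g p = g (p₀.1, p.2) :=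
      eventually_eq_apply_fst_of_comp_inl_eq_zero <| by
        filter_upwards [hg', H] with p hgp hp using ⟨hgp, hp.2⟩
    refine ⟨f p₀ - p₀.1, fun t => g (p₀.1, t), ?_, ?_⟩
    · exact hg.comp_of_eq (analyticAt_const.prod analyticAt_id) rfl
    · filter_upwards [hfst, hsnd] with p hfp hgp
      exact ⟨by rw [hfp, Prod.fst_sub]; ring, hgp⟩
  · rintro ⟨c, h, -, hfg⟩
    filter_upwards [hg', hfg.eventually_nhds] with p hgp hp
    refine ⟨?_, comp_inl_eq_zero_of_eventuallyEq_comp_snd hgp (hp.mono fun q hq => hq.2)⟩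
    rw [EventuallyEq.fderiv_eq (hp.mono fun q hq => hq.1), (hasFDerivAt_fst.add_const c).fderiv]

/-- Lemma `euler-1` i): a holomorphic vector field `E = f·∂₁ + g·∂₂` on the germ `𝒩₂`
satisfies the Euler field equation `L_E(∘) = ∘`, i.e.
`[E, X∘Y] − [E,X]∘Y − X∘[E,Y] = X∘Y` (as germs at `0`) for all holomorphic vector
fields `X, Y`, if and only if `f(t₁,t₂) = t₁ + c` for some `c ∈ ℂ` and `g` depends
only on `t₂` (near the origin). -/
theorem stmt_9 (f g : ℂ × ℂ → ℂ) (U : Set (ℂ × ℂ)) (hU : U ∈ nhds (0 : ℂ × ℂ))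
    (hf : AnalyticOnNhd ℂ f U) (hg : AnalyticOnNhd ℂ g U) :
    (∀ X Y : ℂ × ℂ → ℂ × ℂ, AnalyticOnNhd ℂ X U → AnalyticOnNhd ℂ Y U →
      ∀ᶠ p in nhds (0 : ℂ × ℂ),
        lieN2 (fun q => (f q, g q)) (circN2 X Y) p
          - circN2 (lieN2 (fun q => (f q, g q)) X) Y p
          - circN2 X (lieN2 (fun q => (f q, g q)) Y) p
        = circN2 X Y p) ↔
    (∃ c : ℂ, ∃ h : ℂ → ℂ, AnalyticAt ℂ h 0 ∧
      ∀ᶠ p in nhds (0 : ℂ × ℂ), f p = p.1 + c ∧ g p = h p.2) := by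
  have hfd : ∀ᶠ p in 𝓝 0, DifferentiableAt ℂ f p :=
    eventually_of_mem hU fun p hp => (hf p hp).differentiableAt
  have hgd : ∀ᶠ p in 𝓝 0, DifferentiableAt ℂ g p :=
    eventually_of_mem hU fun p hp => (hg p hp).differentiableAt
  exact (forall_lieDerivCircN2_eq_circN2_iff hU hfd hgd).trans
    (eventually_fderiv_eq_fst_and_comp_inl_eq_zero_iff hfd (hg 0 (mem_of_mem_nhds hU)))
end

section
/- Let r ∈ ℤ_{≥2} and let P_k ∈ ℂ[t₂] be polynomials of degree ≤ r−2 for k ≥ 1. Set f(z,t₂) = t₂^r + ∑_{k≥1} P_k(t₂)z^k. If b₂ = ∑_{k≥0} b₂^{(k)}(t₂)z^k is a formal solution of −(z/2)∂₂³b₂ + (∂₂f)·b₂ + 2f·∂₂b₂ − z∂_z f + f = 0, then b₂^{(0)}(t₂) = −t₂/(r+2), b₂^{(k)} = 0 for all k ≥ 1, and P_k = 0 for all k ≥ 1. -/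
/-!
Write `r = k + 1`. At order `z⁰` the equation is `r t^{r-1} b⁽⁰⁾ + 2 t^r ∂b⁽⁰⁾ + t^r = 0`; at order
`zⁿ`, once the lower orders are known (`b⁽⁰⁾ = -t/(r+2)`, `b⁽ʲ⁾ = 0`, `P_j = 0`, so that the
third derivative of the affine `b⁽ⁿ⁻¹⁾` drops out), it is `r t^{r-1} b⁽ⁿ⁾ + 2 t^r ∂b⁽ⁿ⁾ = Qₙ` with
`(r+2) Qₙ = t Pₙ' + (2 + (n-1)(r+2)) Pₙ`, a polynomial of degree `≤ r - 2`.

The left-hand side is `t^{r-1} (r y + 2 t y')` with `y` holomorphic, so `t^{r-1}` divides the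
polynomial `Qₙ`, which by degree forces `Qₙ = 0`; as `t d/dt + a` with `a > 0` is injective on
polynomials, `Pₙ = 0`. Then `r y + 2 t y' = 0`, i.e. `(t^r y²)' = 0`, so `t^r y² = 0` and `y = 0`.
-/

open Filter Polynomial Topology Finset

section

variable {𝕜 : Type*} [NontriviallyNormedField 𝕜]

lemma eventually_eq_zero_of_eventually_pow_mul_eq_zero {h : 𝕜 → 𝕜} {k : ℕ}
    (hh : ContinuousAt h 0) (H : ∀ᶠ t in 𝓝 0, t ^ k * h t = 0) : ∀ᶠ t in 𝓝 0, h t = 0 := by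
  refine (hh.eventuallyEq_nhds_iff_eventuallyEq_nhdsNE continuousAt_const).1 ?_
  filter_upwards [nhdsWithin_le_nhds H, self_mem_nhdsWithin] with t ht (ht0 : t ≠ 0)
  exact (mul_eq_zero.1 ht).resolve_left (pow_ne_zero k ht0)

lemma X_pow_dvd_of_eventually_eval_eq_pow_mul {Q : 𝕜[X]} {h : 𝕜 → 𝕜} {k : ℕ}
    (hh : ContinuousAt h 0) (H : ∀ᶠ t in 𝓝 0, Q.eval t = t ^ k * h t) : X ^ k ∣ Q := by
  induction k generalizing Q with
  | zero => simp
  | succ k ih =>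
    obtain ⟨R, rfl⟩ : X ∣ Q := by
      rw [X_dvd_iff, coeff_zero_eq_eval_zero]
      simpa using H.self_of_nhds
    have hR : ∀ᶠ t in 𝓝 0, t ^ 1 * (R.eval t - t ^ k * h t) = 0 := by
      filter_upwards [H] with t ht
      rw [eval_mul, eval_X] at ht
      linear_combination ht
    have hR' := eventually_eq_zero_of_eventually_pow_mul_eq_zero
      (R.continuousAt.sub ((continuousAt_id.pow k).mul hh)) hR
    rw [pow_succ']
    exact mul_dvd_mul_left X (ih (hR'.mono fun t ht => sub_eq_zero.1 ht))

lemma eventually_iteratedDeriv_eq_zero_of_eventuallyEq_affine {f : 𝕜 → 𝕜} {x a c : 𝕜} (m : ℕ)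
    (h : f =ᶠ[𝓝 x] fun t => a * t + c) : ∀ᶠ t in 𝓝 x, iteratedDeriv (m + 2) f t = 0 := by
  filter_upwards [h.iteratedDeriv (m + 2)] with t ht
  simp [ht, iteratedDeriv_succ']

end

lemma eventually_eq_zero_of_euler {𝕜 : Type*} [RCLike 𝕜] {f : 𝕜 → 𝕜} (m : ℕ)
    (hf : ∀ᶠ t in 𝓝 0, DifferentiableAt 𝕜 f t)
    (H : ∀ᶠ t in 𝓝 0, ((m : 𝕜) + 1) * f t + t * deriv f t = 0) : ∀ᶠ t in 𝓝 0, f t = 0 := by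
  obtain ⟨ε, hε, hball⟩ := Metric.mem_nhds_iff.1 (hf.and H)
  have hg : ∀ t ∈ Metric.ball (0 : 𝕜) ε, HasDerivAt (fun s => s ^ (m + 1) * f s) 0 t := by
    intro t ht
    obtain ⟨hft, hHt⟩ := hball ht
    refine ((hasDerivAt_pow (m + 1) t).mul hft.hasDerivAt).congr_deriv ?_
    push_cast
    linear_combination t ^ m * hHt
  have hconst : ∀ t ∈ Metric.ball (0 : 𝕜) ε, t ^ (m + 1) * f t = 0 := fun t ht => by
    simpa using Metric.isOpen_ball.is_const_of_deriv_eq_zero (convex_ball 0 ε).isPreconnected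
      (fun s hs => (hg s hs).differentiableAt.differentiableWithinAt)
      (fun s hs => (hg s hs).deriv) ht (Metric.mem_ball_self hε)
  filter_upwards [Metric.ball_mem_nhds 0 hε] with t ht
  rcases eq_or_ne t 0 with rfl | ht0
  · have h0 := (hball (Metric.mem_ball_self hε)).2
    simp only [zero_mul, add_zero, mul_eq_zero] at h0
    exact h0.resolve_left (by norm_cast)
  · exact (mul_eq_zero.1 (hconst t ht)).resolve_left (pow_ne_zero _ ht0)

lemma sum_antidiagonal_eq_add_of_forall {M : Type*} [AddCommMonoid M] {n : ℕ} (hn : n ≠ 0)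
    {g : ℕ × ℕ → M} (hg : ∀ p ∈ antidiagonal n, p.1 ≠ 0 → p.1 ≠ n → g p = 0) :
    ∑ p ∈ antidiagonal n, g p = g (0, n) + g (n, 0) :=
  sum_eq_add_of_mem _ _ (by simp) (by simp) (by simp; omega) fun p hp hne => by
    rw [HasAntidiagonal.mem_antidiagonal] at hp
    exact hg p (HasAntidiagonal.mem_antidiagonal.2 hp) (fun h => hne.1 (Prod.ext h (by omega)))
      (fun h => hne.2 (Prod.ext h (by omega)))

lemma coeff_X_mul_derivative_add_C_mul {R : Type*} [CommSemiring R] (P : R[X]) (a : R) (m : ℕ) :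
    (X * derivative P + C a * P).coeff m = (m + a) * P.coeff m := by
  rcases m with _ | m
  · simp
  · simp only [coeff_add, coeff_X_mul, coeff_derivative, coeff_C_mul, Nat.cast_add, Nat.cast_one]
    ring

lemma eq_zero_of_X_mul_derivative_add_C_mul_eq_zero {R : Type*} [CommRing R] [NoZeroDivisors R]
    [CharZero R] {P : R[X]} {a : ℕ} (ha : a ≠ 0) (h : X * derivative P + C (a : R) * P = 0) :
    P = 0 := by
  ext m
  have hm := congrArg (coeff · m) h
  simp only [coeff_X_mul_derivative_add_C_mul, coeff_zero] at hm
  exact (mul_eq_zero.1 hm).resolve_left (by exact_mod_cast (by omega : m + a ≠ 0))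

lemma eventually_eq_zero_and_eq_zero_of_eventually_eq_eval {k : ℕ} {y : ℂ → ℂ}
    (hy : AnalyticAt ℂ y 0) {Q : ℂ[X]} (hQ : Q.degree < k)
    (H : ∀ᶠ t in 𝓝 0, ((k : ℂ) + 1) * t ^ k * y t + 2 * t ^ (k + 1) * deriv y t = Q.eval t) :
    (∀ᶠ t in 𝓝 0, y t = 0) ∧ Q = 0 := by
  set h : ℂ → ℂ := fun t => ((k : ℂ) + 1) * y t + 2 * t * deriv y t
  have hh : ContinuousAt h 0 := by
    have := hy.deriv
    fun_prop
  have hQh : ∀ᶠ t in 𝓝 0, Q.eval t = t ^ k * h t := H.mono fun t ht => by rw [← ht]; ring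
  have hQ0 : Q = 0 := eq_zero_of_dvd_of_degree_lt
    (X_pow_dvd_of_eventually_eval_eq_pow_mul hh hQh) (by rwa [degree_X_pow])
  have hh0 : ∀ᶠ t in 𝓝 0, h t = 0 := eventually_eq_zero_of_eventually_pow_mul_eq_zero hh
    (hQh.mono fun t ht => by rw [← ht, hQ0, eval_zero])
  have hy_diff : ∀ᶠ t in 𝓝 0, DifferentiableAt ℂ y t :=
    hy.eventually_analyticAt.mono fun t ht => ht.differentiableAt
  -- `h = 0` is an Euler equation for `y ^ 2` with integral weight `k + 1`.
  have hsq : ∀ᶠ t in 𝓝 0, y t ^ 2 = 0 := by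
    refine eventually_eq_zero_of_euler k (hy_diff.mono fun t ht => ht.pow 2) ?_
    filter_upwards [hh0, hy_diff] with t ht hyt
    rw [(hyt.hasDerivAt.fun_pow 2).deriv]
    linear_combination y t * ht
  exact ⟨hsq.mono fun t ht => pow_eq_zero_iff two_ne_zero |>.1 ht, hQ0⟩

lemma eventually_eq_of_order_zero {k : ℕ} {y : ℂ → ℂ} (hy : AnalyticAt ℂ y 0)
    (H : ∀ᶠ t in 𝓝 0,
      ((k : ℂ) + 1) * t ^ k * y t + 2 * (t ^ (k + 1) * deriv y t) + t ^ (k + 1) = 0) :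
    ∀ᶠ t in 𝓝 0, y t = -t / ((k : ℂ) + 3) := by
  have hz : AnalyticAt ℂ (fun t => ((k : ℂ) + 3) * y t + t) 0 := by fun_prop
  have hzH : ∀ᶠ t in 𝓝 0, ((k : ℂ) + 1) * t ^ k * (((k : ℂ) + 3) * y t + t)
      + 2 * t ^ (k + 1) * deriv (fun t => ((k : ℂ) + 3) * y t + t) t = eval t 0 := by
    filter_upwards [H, hy.eventually_analyticAt] with t ht hyt
    rw [((hyt.differentiableAt.hasDerivAt.const_mul _).fun_add (hasDerivAt_id' t)).deriv, eval_zero]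
    linear_combination ((k : ℂ) + 3) * ht
  have hc : (k : ℂ) + 3 ≠ 0 := by norm_cast
  filter_upwards [(eventually_eq_zero_and_eq_zero_of_eventually_eq_eval hz (by simp) hzH).1]
    with t ht
  rw [eq_div_iff hc]
  linear_combination ht

lemma eventually_eq_zero_and_eq_zero_of_order_pos {k n : ℕ} (hn : n ≠ 0) {y b₀ : ℂ → ℂ}
    (hy : AnalyticAt ℂ y 0) (hb₀ : b₀ =ᶠ[𝓝 0] fun t => -t / ((k : ℂ) + 3)) {P : ℂ[X]}
    (hP : P.degree < k)
    (H : ∀ᶠ t in 𝓝 0, ((k : ℂ) + 1) * t ^ k * y t + (derivative P).eval t * b₀ t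
      + 2 * (t ^ (k + 1) * deriv y t + P.eval t * deriv b₀ t) + (1 - n) * P.eval t = 0) :
    (∀ᶠ t in 𝓝 0, y t = 0) ∧ P = 0 := by
  obtain ⟨n, rfl⟩ := Nat.exists_eq_succ_of_ne_zero hn
  set a : ℕ := 2 + n * (k + 3)
  set E : ℂ[X] := X * derivative P + C (a : ℂ) * P
  have hE : E.degree < k := by
    rw [degree_lt_iff_coeff_zero]
    intro m hm
    rw [coeff_X_mul_derivative_add_C_mul,
      coeff_eq_zero_of_degree_lt (hP.trans_le (by exact_mod_cast hm)), mul_zero]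
  have hc3 : (k : ℂ) + 3 ≠ 0 := by norm_cast
  have hc : ((k : ℂ) + 3)⁻¹ ≠ 0 := inv_ne_zero hc3
  have hb₀' : ∀ᶠ t in 𝓝 0, deriv b₀ t = -1 / ((k : ℂ) + 3) := by
    filter_upwards [hb₀.deriv] with t ht
    rw [ht, ((hasDerivAt_id' t).fun_neg.div_const _).deriv]
  have hQ : ∀ᶠ t in 𝓝 0, ((k : ℂ) + 1) * t ^ k * y t + 2 * t ^ (k + 1) * deriv y t
      = (C ((k : ℂ) + 3)⁻¹ * E).eval t := by
    filter_upwards [H, hb₀, hb₀'] with t ht hbt hbt'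
    rw [hbt, hbt'] at ht
    simp only [E, a, eval_mul, eval_add, eval_C, eval_X]
    push_cast at ht ⊢
    linear_combination ht - n * P.eval t * inv_mul_cancel₀ hc3
  obtain ⟨hy0, hE0⟩ := eventually_eq_zero_and_eq_zero_of_eventually_eq_eval hy
    (by rwa [degree_C_mul hc]) hQ
  refine ⟨hy0, eq_zero_of_X_mul_derivative_add_C_mul_eq_zero (a := a) (by omega) ?_⟩
  simpa [E, hc] using hE0

/-- Proposition `step-1` iv): let `r ≥ 2` and `P_k ∈ ℂ[t₂]` polynomials of degree
`≤ r−2` (for `k ≥ 1`), and set `f(z,t₂) = t₂^r + ∑_{k≥1} P_k(t₂) z^k`. If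
`b₂ = ∑_k b₂^{(k)}(t₂) z^k` (with holomorphic coefficients on a common
neighbourhood `U` of `0`) solves
`−(z/2)∂₂³b₂ + (∂₂f)·b₂ + 2f·∂₂b₂ − z∂_z f + f = 0`
(coefficientwise in `z`, on `U`), then `b₂^{(0)}(t₂) = −t₂/(r+2)`, `b₂^{(k)} = 0`
for all `k ≥ 1`, and `P_k = 0` for all `k ≥ 1`. -/
theorem stmt_16 (r : ℕ) (hr : 2 ≤ r) (P : ℕ → Polynomial ℂ)
    (hP : ∀ k, 1 ≤ k → (P k).degree ≤ (r - 2 : ℕ))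
    (fc : ℕ → ℂ → ℂ)
    (hfc : fc = fun k t => if k = 0 then t ^ r else (P k).eval t)
    (b : ℕ → ℂ → ℂ) (U : Set ℂ) (hU : U ∈ nhds (0 : ℂ))
    (hb : ∀ k, AnalyticOnNhd ℂ (b k) U)
    (heq : ∀ n : ℕ, ∀ t ∈ U,
      (if n = 0 then 0 else -(1 / 2 : ℂ) * iteratedDeriv 3 (b (n - 1)) t)
        + (∑ p ∈ Finset.HasAntidiagonal.antidiagonal n, deriv (fc p.1) t * b p.2 t)
        + 2 * (∑ p ∈ Finset.HasAntidiagonal.antidiagonal n, fc p.1 t * deriv (b p.2) t)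
        + (1 - (n : ℂ)) * fc n t = 0) :
    (∀ᶠ t in nhds (0 : ℂ), b 0 t = -t / ((r : ℂ) + 2)) ∧
    (∀ k, 1 ≤ k → ∀ᶠ t in nhds (0 : ℂ), b k t = 0) ∧
    (∀ k, 1 ≤ k → P k = 0) := by
  subst hfc
  obtain ⟨k, rfl⟩ : ∃ k, r = k + 1 := ⟨r - 1, by omega⟩
  have hPk (n : ℕ) (hn : 1 ≤ n) : (P n).degree < k :=
    (hP n hn).trans_lt (by exact_mod_cast (by omega : k + 1 - 2 < k))
  have hy (n : ℕ) : AnalyticAt ℂ (b n) 0 := hb n 0 (mem_of_mem_nhds hU)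
  have hb₀ : b 0 =ᶠ[𝓝 0] fun t => -t / ((k : ℂ) + 3) := by
    refine eventually_eq_of_order_zero (hy 0) ?_
    filter_upwards [hU] with t ht
    simpa [mul_add, mul_comm] using heq 0 t ht
  have main (n : ℕ) (hn : 1 ≤ n) : (∀ᶠ t in 𝓝 0, b n t = 0) ∧ P n = 0 := by
    induction n using Nat.strong_induction_on with
    | _ n ih =>
    have hmid (p : ℕ × ℕ) (hp : p ∈ antidiagonal n) (hp0 : p.1 ≠ 0) (hpn : p.1 ≠ n) : P p.1 = 0 :=
      (ih p.1 (by have := HasAntidiagonal.mem_antidiagonal.1 hp; omega) (by omega)).2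
    obtain ⟨a, c, hlin⟩ : ∃ a c : ℂ, b (n - 1) =ᶠ[𝓝 0] fun t => a * t + c := by
      rcases (by omega : n = 1 ∨ 1 < n) with rfl | hn1
      · exact ⟨-1 / ((k : ℂ) + 3), 0, hb₀.mono fun t ht => by rw [ht]; ring⟩
      · exact ⟨0, 0, (ih (n - 1) (by omega) (by omega)).1.mono fun t ht => by simp [ht]⟩
    refine eventually_eq_zero_and_eq_zero_of_order_pos (n := n) (by omega) (hy n) hb₀ (hPk n hn) ?_
    filter_upwards [hU, eventually_iteratedDeriv_eq_zero_of_eventuallyEq_affine 1 hlin]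
      with t ht h3
    have E := heq n t ht
    rw [sum_antidiagonal_eq_add_of_forall (by omega) fun p hp h0 h1 => by simp [h0, hmid p hp h0 h1],
      sum_antidiagonal_eq_add_of_forall (by omega) fun p hp h0 h1 => by simp [h0, hmid p hp h0 h1]]
      at E
    simpa [h3, show n ≠ 0 by omega] using E
  refine ⟨?_, fun n hn => (main n hn).1, fun n hn => (main n hn).2⟩
  filter_upwards [hb₀] with t ht
  rw [ht]
  push_cast
  ring
end
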